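/- For p ∈ [1,∞], 1,p-approval voting is vote distance rationalizable with respect to the unanimity class using the layered-graph shortest-path metric: for every election E = ⟨v_1,...,v_m⟩, the singletons {c} minimizing min_{E'∈U_{{c}}} Σ_i d(v_i, v'_i) are exactly the candidates with maximal score s_p(c) = Σ_i 1[c∈v_i]/|v_i|^{1/p}, and the minimal distance for candidate c equals Σ_i |v_i|^{−1/p} − s_p(c). -/

import Mathlib

open scoped ENNReal BigOperators symmDiff

/-- Normalizer `|b|^{1/p}` for `p ∈ [1,∞]` (for `p = ∞` this is `|b|^0 = 1`). -/
noncomputable def wt (p : ℝ≥0∞) (card : ℕ) : ℝ := (card : ℝ) ^ (1 / p).toReal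

/-- Adjacency in the layered ballot graph: ballots differing in exactly one element. -/
def Adj {C : Type*} [DecidableEq C] (b b' : Finset C) : Prop := (b ∆ b').card = 1

/-- Cost of the edge between adjacent ballots: `1/|b|^{1/p}` where `b` is the smaller one. -/
noncomputable def edgeCost {C : Type*} (p : ℝ≥0∞) (b b' : Finset C) : ℝ :=
  (wt p (min b.card b'.card))⁻¹

/-- Total cost of a path, given as the list of its vertices. -/
noncomputable def pathCost {C : Type*} (p : ℝ≥0∞) : List (Finset C) → ℝ
  | [] => 0
  | [_] => 0
  | a :: b :: l => edgeCost p a b + pathCost p (b :: l)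

/-- `L` is a walk from `v` to `w` through nonempty ballots in the layered graph. -/
def IsWalk {C : Type*} [DecidableEq C] (L : List (Finset C)) (v w : Finset C) : Prop :=
  L.Chain' Adj ∧ L.head? = some v ∧ L.getLast? = some w ∧ ∀ b ∈ L, b.Nonempty

/-- Shortest-path distance between ballots in the layered graph. -/
noncomputable def gdist {C : Type*} [DecidableEq C] (p : ℝ≥0∞) (v w : Finset C) : ℝ :=
  sInf {x : ℝ | ∃ L : List (Finset C), IsWalk L v w ∧ x = pathCost p L}

/-- Minimal distance from election `E` to a unanimous election all of whose
ballots contain `c`, under the coordinatewise sum of the layered-graph metric. -/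
noncomputable def elecDist {C : Type*} [Fintype C] [DecidableEq C] (p : ℝ≥0∞)
    {m : ℕ} (E : Fin m → Finset C) (c : C) : ℝ :=
  sInf {x : ℝ | ∃ E' : Fin m → Finset C,
    (∀ i, c ∈ E' i ∧ (E' i).Nonempty) ∧ x = ∑ i, gdist p (E i) (E' i)}

/-- Score `s_p(c) = Σ_i 1[c ∈ v_i]/|v_i|^{1/p}`. -/
noncomputable def elecScore {C : Type*} [DecidableEq C] (p : ℝ≥0∞)
    {m : ℕ} (E : Fin m → Finset C) (c : C) : ℝ :=
  ∑ i, if c ∈ E i then (wt p (E i).card)⁻¹ else 0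

/-!
The potential `φ_c(b) = [c ∉ b] / |b|^{1/p}` (`missWeight p c b`) vanishes on ballots containing
`c` and drops by at most the edge cost along every edge, so `d(v, w) ≥ φ_c(v)` whenever `c ∈ w`;
the single edge `v → v ∪ {c}` attains this bound. Summing over the voters, the distance of `E`
to `U_{c}` is `Σ_i φ_c(v_i) = Σ_i |v_i|^{-1/p} - s_p(c)`, which is smallest exactly when `s_p(c)`
is largest.
-/

section Walks
variable {C : Type*} (p : ℝ≥0∞)

lemma wt_pos {n : ℕ} (hn : 0 < n) : 0 < wt p n :=
  Real.rpow_pos_of_pos (by exact_mod_cast hn) _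

lemma inv_wt_le_inv_wt {j k : ℕ} (hj : 0 < j) (hjk : j ≤ k) : (wt p k)⁻¹ ≤ (wt p j)⁻¹ :=
  inv_anti₀ (wt_pos p hj) <|
    Real.rpow_le_rpow (Nat.cast_nonneg j) (by exact_mod_cast hjk) ENNReal.toReal_nonneg

lemma pathCost_nonneg : ∀ L : List (Finset C), 0 ≤ pathCost p L
  | [] | [_] => le_rfl
  | _ :: b :: l =>
    add_nonneg (inv_nonneg.mpr (Real.rpow_nonneg (Nat.cast_nonneg _) _)) (pathCost_nonneg (b :: l))

variable [DecidableEq C]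

lemma IsWalk.singleton {v : Finset C} (hv : v.Nonempty) : IsWalk [v] v v :=
  ⟨List.isChain_singleton v, rfl, rfl, by simpa using hv⟩

lemma IsWalk.cons {L : List (Finset C)} {u v w : Finset C} (hL : IsWalk L u w) (hvu : Adj v u)
    (hv : v.Nonempty) : IsWalk (v :: L) v w := by
  obtain ⟨hchain, hu, hw, hne⟩ := hL
  cases L with
  | nil => simp at hu
  | cons u' l =>
    obtain rfl : u' = u := by simpa using hu
    exact ⟨List.isChain_cons_cons.mpr ⟨hvu, hchain⟩, rfl, by rwa [List.getLast?_cons_cons],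
      by simpa [hv] using hne⟩

lemma gdist_le_pathCost {L : List (Finset C)} {v w : Finset C} (hL : IsWalk L v w) :
    gdist p v w ≤ pathCost p L :=
  csInf_le ⟨0, by rintro _ ⟨L', -, rfl⟩; exact pathCost_nonneg p L'⟩ ⟨L, hL, rfl⟩

lemma IsWalk.sub_le_pathCost {f : Finset C → ℝ}
    (hf : ∀ a b : Finset C, a.Nonempty → b.Nonempty → Adj a b → f a - f b ≤ edgeCost p a b) :
    ∀ {L : List (Finset C)} {v w : Finset C}, IsWalk L v w → f v - f w ≤ pathCost p L
  | [], _, _, ⟨_, hv, _, _⟩ => by simp at hv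
  | [a], v, w, ⟨_, hv, hw, _⟩ => by
    obtain rfl : a = v := by simpa using hv
    obtain rfl : a = w := by simpa using hw
    simp [pathCost]
  | a :: b :: l, v, w, ⟨hchain, hv, hw, hne⟩ => by
    obtain rfl : a = v := by simpa using hv
    replace hchain : Adj a b ∧ List.IsChain Adj (b :: l) := List.isChain_cons_cons.mp hchain
    have htail : IsWalk (b :: l) b w :=
      ⟨hchain.2, rfl, by rwa [List.getLast?_cons_cons] at hw, fun x hx => hne x (by simp [hx])⟩
    have hedge := hf a b (hne a (by simp)) (hne b (by simp)) hchain.1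
    have hrest := IsWalk.sub_le_pathCost hf htail
    simp only [pathCost]
    linarith

lemma adj_symmDiff_singleton (v : Finset C) (x : C) : Adj v (v ∆ {x}) := by
  simp [Adj, symmDiff_symmDiff_cancel_left]

lemma exists_mem_symmDiff_nonempty {v w : Finset C} (hw : w.Nonempty) (hvw : v ≠ w) :
    ∃ x ∈ v ∆ w, (v ∆ {x}).Nonempty := by
  by_cases hwv : w ⊆ v
  · obtain ⟨x, hxv, hxw⟩ :=
      Finset.exists_of_ssubset (Finset.ssubset_iff_subset_ne.mpr ⟨hwv, hvw.symm⟩)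
    obtain ⟨y, hy⟩ := hw
    refine ⟨x, Finset.mem_symmDiff.mpr (Or.inl ⟨hxv, hxw⟩), y, ?_⟩
    have : y ≠ x := by rintro rfl; exact hxw hy
    simp [Finset.mem_symmDiff, hwv hy, this]
  · obtain ⟨x, hxw, hxv⟩ := Finset.not_subset.mp hwv
    exact ⟨x, Finset.mem_symmDiff.mpr (Or.inr ⟨hxw, hxv⟩), x, by simp [Finset.mem_symmDiff, hxv]⟩

lemma exists_isWalk {v w : Finset C} (hv : v.Nonempty) (hw : w.Nonempty) :
    ∃ L, IsWalk L v w := by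
  induction hn : (v ∆ w).card using Nat.strong_induction_on generalizing v with
  | _ n ih =>
    by_cases hvw : v = w
    · exact ⟨[v], hvw ▸ IsWalk.singleton hv⟩
    obtain ⟨x, hx, hvx⟩ := exists_mem_symmDiff_nonempty hw hvw
    have hcard : (v ∆ {x} ∆ w).card < n := by
      rw [symmDiff_right_comm, symmDiff_comm,
        symmDiff_of_le (Finset.singleton_subset_iff.mpr hx), Finset.sdiff_singleton_eq_erase, ← hn]
      exact Finset.card_erase_lt_of_mem hx
    obtain ⟨L, hL⟩ := ih _ hcard hvx rfl
    exact ⟨v :: L, hL.cons (adj_symmDiff_singleton v x) hv⟩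

end Walks

section Potential
variable {C : Type*} [DecidableEq C] (p : ℝ≥0∞)

noncomputable def missWeight (c : C) (b : Finset C) : ℝ :=
  if c ∈ b then 0 else (wt p b.card)⁻¹

lemma missWeight_sub_le_edgeCost (c : C) {a b : Finset C} (ha : a.Nonempty) (hb : b.Nonempty) :
    missWeight p c a - missWeight p c b ≤ edgeCost p a b := by
  have hmin : 0 < min a.card b.card := lt_min ha.card_pos hb.card_pos
  have hb0 : 0 ≤ missWeight p c b := by
    unfold missWeight; split_ifs
    exacts [le_rfl, (inv_pos.mpr (wt_pos p hb.card_pos)).le]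
  have ha_le : missWeight p c a ≤ (wt p a.card)⁻¹ := by
    unfold missWeight; split_ifs
    exacts [(inv_pos.mpr (wt_pos p ha.card_pos)).le, le_rfl]
  have := inv_wt_le_inv_wt p hmin (min_le_left _ _)
  rw [edgeCost]
  linarith

lemma missWeight_le_gdist {c : C} {v w : Finset C} (hv : v.Nonempty) (hw : w.Nonempty)
    (hcw : c ∈ w) : missWeight p c v ≤ gdist p v w := by
  obtain ⟨L, hL⟩ := exists_isWalk hv hw
  refine le_csInf ⟨_, L, hL, rfl⟩ ?_
  rintro _ ⟨L', hL', rfl⟩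
  have := hL'.sub_le_pathCost p fun a b ha hb _ => missWeight_sub_le_edgeCost p c ha hb
  simpa [missWeight, hcw] using this

lemma gdist_insert_eq_missWeight (c : C) {v : Finset C} (hv : v.Nonempty) :
    gdist p v (insert c v) = missWeight p c v := by
  refine le_antisymm ?_
    (missWeight_le_gdist p hv (Finset.insert_nonempty c v) (Finset.mem_insert_self c v))
  by_cases hc : c ∈ v
  · rw [Finset.insert_eq_of_mem hc]
    simpa [hc, missWeight, pathCost] using gdist_le_pathCost p (IsWalk.singleton hv)
  · have hadj : Adj v (insert c v) := by
      have : v ∆ insert c v = {c} := by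
        ext a; by_cases ha : a = c <;> simp [Finset.mem_symmDiff, ha, hc]
      simp [Adj, this]
    have hL : IsWalk [v, insert c v] v (insert c v) :=
      (IsWalk.singleton (Finset.insert_nonempty c v)).cons hadj hv
    simpa [hc, missWeight, pathCost, edgeCost, Finset.card_insert_of_notMem hc]
      using gdist_le_pathCost p hL

lemma elecDist_eq_sum_missWeight [Fintype C] {m : ℕ} {E : Fin m → Finset C}
    (hE : ∀ i, (E i).Nonempty) (c : C) : elecDist p E c = ∑ i, missWeight p c (E i) := by
  refine IsLeast.csInf_eq ⟨?_, ?_⟩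
  · refine ⟨fun i => insert c (E i),
      fun i => ⟨Finset.mem_insert_self _ _, Finset.insert_nonempty _ _⟩, ?_⟩
    exact Finset.sum_congr rfl fun i _ => (gdist_insert_eq_missWeight p c (hE i)).symm
  · rintro _ ⟨E', hE', rfl⟩
    exact Finset.sum_le_sum fun i _ => missWeight_le_gdist p (hE i) (hE' i).2 (hE' i).1

lemma sum_missWeight_eq {m : ℕ} (E : Fin m → Finset C) (c : C) :
    ∑ i, missWeight p c (E i) = ∑ i, (wt p (E i).card)⁻¹ - elecScore p E c := by
  rw [elecScore, ← Finset.sum_sub_distrib]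
  refine Finset.sum_congr rfl fun i _ => ?_
  unfold missWeight
  split_ifs <;> ring

end Potential

theorem stmt15_general {C : Type*} [Fintype C] [DecidableEq C]
    (p : ℝ≥0∞)
    {m : ℕ} (E : Fin m → Finset C) (hE : ∀ i, (E i).Nonempty) :
    (∀ c : C, elecDist p E c = (∑ i, (wt p (E i).card)⁻¹) - elecScore p E c) ∧
    {c : C | ∀ c' : C, elecDist p E c ≤ elecDist p E c'} =
      {c : C | ∀ c' : C, elecScore p E c' ≤ elecScore p E c} := by
  have hdist (c : C) : elecDist p E c = (∑ i, (wt p (E i).card)⁻¹) - elecScore p E c := by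
    rw [elecDist_eq_sum_missWeight p hE, sum_missWeight_eq]
  refine ⟨hdist, ?_⟩
  ext c
  simp only [Set.mem_ofPred_eq, hdist, sub_le_sub_iff_left]

theorem stmt15 {C : Type*} [Fintype C] [DecidableEq C]
    (p : ℝ≥0∞) (hp : 1 ≤ p)
    {m : ℕ} (E : Fin m → Finset C) (hE : ∀ i, (E i).Nonempty) :
    (∀ c : C, elecDist p E c = (∑ i, (wt p (E i).card)⁻¹) - elecScore p E c) ∧
    {c : C | ∀ c' : C, elecDist p E c ≤ elecDist p E c'} =
      {c : C | ∀ c' : C, elecScore p E c' ≤ elecScore p E c} :=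
  stmt15_general p E hE
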